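/- For the Pierrehumbert vector fields X̂₁(q,p,u,v) = (sin p, 0, v·cos p, 0) and X̂₂(q,p,u,v) = (0, sin q, 0, u·cos q) on ℝ⁴, the 4×4 matrix with columns X̂₁, X̂₂, [X̂₁,X̂₂], [X̂₁,[X̂₁,X̂₂]] evaluated at the point (π/3, π/3, √2/2, √2/2) has determinant 27/128, and in particular these four vector fields together with the two iterated brackets span ℝ⁴ at that point. -/

import Mathlib

open Real

/-- The Lie bracket of vector fields on `ℝ⁴`: `[X,Y](x) = DY(x)·X(x) − DX(x)·Y(x)`. -/
noncomputable def lieBracketR4 (X Y : (Fin 4 → ℝ) → (Fin 4 → ℝ)) (x : Fin 4 → ℝ) :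
    Fin 4 → ℝ :=
  fderiv ℝ Y x (X x) - fderiv ℝ X x (Y x)

/-- Lifted Pierrehumbert horizontal shear: `X̂₁(q,p,u,v) = (sin p, 0, v cos p, 0)`. -/
noncomputable def pierreX1 (x : Fin 4 → ℝ) : Fin 4 → ℝ :=
  ![Real.sin (x 1), 0, x 3 * Real.cos (x 1), 0]

/-- Lifted Pierrehumbert vertical shear: `X̂₂(q,p,u,v) = (0, sin q, 0, u cos q)`. -/
noncomputable def pierreX2 (x : Fin 4 → ℝ) : Fin 4 → ℝ :=
  ![0, Real.sin (x 0), 0, x 2 * Real.cos (x 0)]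

/-- The point `(π/3, π/3, √2/2, √2/2)`. -/
noncomputable def pierrePt : Fin 4 → ℝ :=
  ![Real.pi / 3, Real.pi / 3, Real.sqrt 2 / 2, Real.sqrt 2 / 2]

/-! At the point, the `q,p` components of the four fields are rational multiples of `√3`
and the `u,v` components rational multiples of `√2`, so the determinant is `6` times a
rational determinant, `6 · 9/256 = 27/128`. -/

theorem span_range_eq_top_of_det_ne_zero {ι K : Type*} [Fintype ι] [DecidableEq ι] [Field K]
    {v : ι → ι → K} (h : (Matrix.of fun i j => v j i).det ≠ 0) :
    Submodule.span K (Set.range v) = ⊤ :=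
  (Matrix.linearIndependent_cols_of_det_ne_zero h).span_eq_top_of_card_eq_finrank' (by simp)

@[simp]
lemma fderiv_eval_apply {𝕜 ι : Type*} [NontriviallyNormedField 𝕜] [Fintype ι] (i : ι)
    (x v : ι → 𝕜) : fderiv 𝕜 (fun y : ι → 𝕜 => y i) x v = v i := by
  simp [(hasFDerivAt_apply i x).fderiv]

lemma lieBracketR4_apply {X Y : (Fin 4 → ℝ) → (Fin 4 → ℝ)} {x : Fin 4 → ℝ}
    (hX : DifferentiableAt ℝ X x) (hY : DifferentiableAt ℝ Y x) (i : Fin 4) :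
    lieBracketR4 X Y x i =
      fderiv ℝ (fun y => Y y i) x (X x) - fderiv ℝ (fun y => X y i) x (Y x) := by
  simp [lieBracketR4, fderiv_apply hX, fderiv_apply hY]

noncomputable def pierreX12 (x : Fin 4 → ℝ) : Fin 4 → ℝ :=
  ![-(cos (x 1) * sin (x 0)), cos (x 0) * sin (x 1),
    -(x 2 * cos (x 1) * cos (x 0)) + x 3 * sin (x 1) * sin (x 0),
    x 3 * cos (x 1) * cos (x 0) - x 2 * sin (x 1) * sin (x 0)]

noncomputable def pierreX112 (x : Fin 4 → ℝ) : Fin 4 → ℝ :=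
  ![-(2 * cos (x 1) * cos (x 0) * sin (x 1)), -(sin (x 1) ^ 2 * sin (x 0)),
    -(2 * x 3 * cos (x 1) ^ 2 * cos (x 0)) + 2 * x 3 * cos (x 0) * sin (x 1) ^ 2
      + 2 * x 2 * sin (x 1) * cos (x 1) * sin (x 0),
    -(sin (x 1) * (x 2 * cos (x 0) * sin (x 1) + 2 * x 3 * cos (x 1) * sin (x 0)))]

lemma differentiable_pierreX1 : Differentiable ℝ pierreX1 :=
  differentiable_pi.2 fun i => by fin_cases i <;> simp [pierreX1] <;> fun_prop

lemma differentiable_pierreX2 : Differentiable ℝ pierreX2 :=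
  differentiable_pi.2 fun i => by fin_cases i <;> simp [pierreX2] <;> fun_prop

lemma differentiable_pierreX12 : Differentiable ℝ pierreX12 :=
  differentiable_pi.2 fun i => by fin_cases i <;> simp [pierreX12] <;> fun_prop

lemma lieBracketR4_pierreX1_pierreX2 : lieBracketR4 pierreX1 pierreX2 = pierreX12 := by
  ext x i
  rw [lieBracketR4_apply (differentiable_pierreX1 x) (differentiable_pierreX2 x)]
  fin_cases i <;>
    simp (disch := fun_prop) [pierreX1, pierreX2, pierreX12, fderiv_sin, fderiv_fun_mul] <;> ring

lemma lieBracketR4_pierreX1_pierreX12 : lieBracketR4 pierreX1 pierreX12 = pierreX112 := by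
  ext x i
  rw [lieBracketR4_apply (differentiable_pierreX1 x) (differentiable_pierreX12 x)]
  fin_cases i <;>
    simp (disch := fun_prop) [pierreX1, pierreX12, pierreX112, fderiv_sin, fderiv_cos,
      fderiv_fun_mul, fderiv_fun_add, fderiv_fun_sub, fderiv_fun_neg] <;> ring

lemma sq_sqrt_two : √2 ^ 2 = 2 := Real.sq_sqrt (by norm_num)

lemma sq_sqrt_three : √3 ^ 2 = 3 := Real.sq_sqrt (by norm_num)

lemma pierreX1_pierrePt : pierreX1 pierrePt = ![√3 / 2, 0, √2 / 4, 0] := by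
  ext i; fin_cases i <;> simp [pierreX1, pierrePt]; ring

lemma pierreX2_pierrePt : pierreX2 pierrePt = ![0, √3 / 2, 0, √2 / 4] := by
  ext i; fin_cases i <;> simp [pierreX2, pierrePt]; ring

lemma pierreX12_pierrePt : pierreX12 pierrePt = ![-(√3 / 4), √3 / 4, √2 / 4, -(√2 / 4)] := by
  ext i; fin_cases i <;> simp [pierreX12, pierrePt] <;> grind [sq_sqrt_two, sq_sqrt_three]

lemma pierreX112_pierrePt :
    pierreX112 pierrePt = ![-(√3 / 4), -(3 * √3 / 8), 5 * √2 / 8, -(9 * √2 / 16)] := by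
  ext i; fin_cases i <;> simp [pierreX112, pierrePt] <;> grind [sq_sqrt_two, sq_sqrt_three]

lemma det_frame_at_pierrePt :
    (Matrix.of fun i j : Fin 4 => (![![√3 / 2, 0, √2 / 4, 0], ![0, √3 / 2, 0, √2 / 4],
      ![-(√3 / 4), √3 / 4, √2 / 4, -(√2 / 4)],
      ![-(√3 / 4), -(3 * √3 / 8), 5 * √2 / 8, -(9 * √2 / 16)]] j) i).det = 27 / 128 := by
  simp [Matrix.det_succ_column_zero, Fin.sum_univ_succ, Fin.succAbove]
  grind [sq_sqrt_two, sq_sqrt_three]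

theorem pierrehumbert_hormander_determinant :
    (Matrix.of (fun i j : Fin 4 =>
        (![pierreX1 pierrePt, pierreX2 pierrePt,
           lieBracketR4 pierreX1 pierreX2 pierrePt,
           lieBracketR4 pierreX1 (lieBracketR4 pierreX1 pierreX2) pierrePt] j) i)).det
      = 27 / 128 ∧
    Submodule.span ℝ
        ({pierreX1 pierrePt, pierreX2 pierrePt,
          lieBracketR4 pierreX1 pierreX2 pierrePt,
          lieBracketR4 pierreX1 (lieBracketR4 pierreX1 pierreX2) pierrePt} :
          Set (Fin 4 → ℝ)) = ⊤ := by
  rw [lieBracketR4_pierreX1_pierreX2, lieBracketR4_pierreX1_pierreX12, pierreX1_pierrePt,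
    pierreX2_pierrePt, pierreX12_pierrePt, pierreX112_pierrePt]
  refine ⟨det_frame_at_pierrePt, ?_⟩
  have hspan := span_range_eq_top_of_det_ne_zero (det_frame_at_pierrePt.trans_ne (by norm_num))
  simpa only [Matrix.range_cons, Matrix.range_empty, Set.union_empty, Set.singleton_union]
    using hspan
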